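/- For every natural number n, the number of words of length n over a four-letter alphabet {−1, 0, 0̄, 1} (where both 0 and 0̄ have value 0 in sums) whose total value is 0 and all of whose partial value-sums are nonnegative equals Σ_{k ≥ 0} C(n, 2k) · 2^(n−2k) · C_k. -/

import Mathlib

/-!
Zero letters do not move partial sums, so a word satisfies the two conditions exactly when
the subword of its letters `±1`, read as up and down steps, is a Dyck word. A word of length `n`
whose Dyck part has semilength `k` is then determined by three independent choices: the Dyck
word (`C_k` ways), the `2k` positions of the nonzero letters (`C(n, 2k)` ways) and the sequence
of the remaining `n - 2k` letters in `{0, 0̄}` (`2^(n-2k)` ways). The count of such interleavings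
follows Pascal's rule, by splitting off the first letter.
-/

inductive Letter : Type
  | up | zero | zbar | down
deriving DecidableEq

def val : Letter → ℤ
  | .up => 1
  | .zero => 0
  | .zbar => 0
  | .down => -1

namespace List

variable {α β γ : Type*}

theorem forall_prefix_filterMap_iff (f : α → Option β) (P : List β → Prop) (l : List α) :
    (∀ p, p <+: l → P (p.filterMap f)) ↔ ∀ q, q <+: l.filterMap f → P q := by
  refine ⟨fun h => ?_, fun h p hp => h _ (hp.filterMap f)⟩
  induction l generalizing P with
  | nil => simpa using h [] (prefix_refl _)
  | cons a l ih =>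
    have tail : ∀ p, p <+: l → P ((a :: p).filterMap f) := fun p hp =>
      h _ (cons_prefix_cons.2 ⟨rfl, hp⟩)
    cases hfa : f a with
    | none => simpa [filterMap_cons, hfa] using ih P (by simpa [filterMap_cons, hfa] using tail)
    | some b =>
      rintro (_ | ⟨b', q⟩) hq
      · simpa using h [] nil_prefix
      · rw [filterMap_cons, hfa, cons_prefix_cons] at hq
        obtain ⟨rfl, hq⟩ := hq
        exact ih (fun q => P (b' :: q)) (by simpa [filterMap_cons, hfa] using tail) q hq

theorem ncard_setOf_length_succ [Fintype α] (P : List α → Prop) (n : ℕ) :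
    {l : List α | l.length = n + 1 ∧ P l}.ncard =
      ∑ a, {l | l.length = n ∧ P (a :: l)}.ncard := by
  have split : {l : List α | l.length = n + 1 ∧ P l} =
      ⋃ a, (a :: ·) '' {l | l.length = n ∧ P (a :: l)} := by
    ext (_ | ⟨a, l⟩) <;> simp
  rw [split, Set.ncard_iUnion_of_finite, finsum_eq_sum_of_fintype]
  · simp only [Set.ncard_image_of_injective _ cons_injective]
  · exact fun a => ((finite_length_eq α n).subset fun l hl => hl.1).image _
  · rintro a b hab
    simp only [Function.onFun, Set.disjoint_left]
    rintro _ ⟨l, -, rfl⟩ ⟨l', -, h⟩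
    exact hab (cons_eq_cons.1 h).1.symm

theorem ncard_filterMap_getLeft_eq [Fintype β] [DecidableEq β] [Fintype γ]
    (n : ℕ) (d : List β) :
    {l : List (β ⊕ γ) | l.length = n ∧ l.filterMap Sum.getLeft? = d}.ncard =
      n.choose d.length * Fintype.card γ ^ (n - d.length) := by
  induction n generalizing d with
  | zero =>
    cases d with
    | nil =>
      rw [show {l : List (β ⊕ γ) | l.length = 0 ∧ l.filterMap Sum.getLeft? = []} = {[]} by
        ext l; simp +contextual [length_eq_zero_iff]]
      simp
    | cons b d =>
      rw [show {l : List (β ⊕ γ) | l.length = 0 ∧ l.filterMap Sum.getLeft? = b :: d} = ∅ by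
        ext l; simp +contextual [length_eq_zero_iff]]
      simp
  | succ n ih =>
    rw [ncard_setOf_length_succ, Fintype.sum_sum_type]
    simp only [filterMap_cons, Sum.getLeft?_inl, Sum.getLeft?_inr, ih, Finset.sum_const,
      Finset.card_univ, smul_eq_mul]
    cases d with
    | nil => simp [pow_succ, mul_comm]
    | cons b d =>
      rw [Finset.sum_eq_single b (fun b' _ hb' => by simp [hb']) (by simp)]
      simp only [cons.injEq, true_and, ih, length_cons]
      rw [Nat.add_sub_add_right, Nat.choose_succ_succ', add_mul]
      congr 1
      rcases lt_or_ge n (d.length + 1) with hn | hn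
      · simp [Nat.choose_eq_zero_of_lt hn]
      · rw [show n - d.length = n - (d.length + 1) + 1 by omega, pow_succ]
        ring

end List

instance : Fintype DyckStep := ⟨{.U, .D}, fun s => by cases s <;> simp⟩

def DyckStep.val : DyckStep → ℤ
  | .U => 1
  | .D => -1

theorem DyckStep.sum_map_val (d : List DyckStep) :
    (d.map DyckStep.val).sum = d.count .U - d.count .D := by
  induction d with
  | nil => rfl
  | cons s d ih => cases s <;> simp [DyckStep.val, ih] <;> ring

theorem DyckWord.exists_toList_eq_iff (d : List DyckStep) :
    (∃ p : DyckWord, p.toList = d) ↔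
      (d.map DyckStep.val).sum = 0 ∧ ∀ q, q <+: d → 0 ≤ (q.map DyckStep.val).sum := by
  simp only [DyckStep.sum_map_val, sub_eq_zero, sub_nonneg, Nat.cast_inj, Nat.cast_le]
  constructor
  · rintro ⟨p, rfl⟩
    refine ⟨p.count_U_eq_count_D, fun q hq => ?_⟩
    rw [List.prefix_iff_eq_take.1 hq]
    exact p.count_D_le_count_U _
  · rintro ⟨hUD, hpre⟩
    exact ⟨⟨d, hUD, fun i => hpre _ (List.take_prefix i d)⟩, rfl⟩

def dyckShuffles (γ : Type*) (n : ℕ) : Set (List (DyckStep ⊕ γ)) :=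
  {l | l.length = n ∧ ∃ p : DyckWord, p.toList = l.filterMap Sum.getLeft?}

theorem ncard_dyckShuffles (γ : Type*) [Fintype γ] (n : ℕ) :
    (dyckShuffles γ n).ncard =
      ∑ k ∈ Finset.range (n + 1),
        n.choose (2 * k) * Fintype.card γ ^ (n - 2 * k) * catalan k := by
  have cover : dyckShuffles γ n =
      ⋃ i : Σ k : Fin (n + 1), {p : DyckWord // p.semilength = k},
        {l | l.length = n ∧ l.filterMap Sum.getLeft? = i.2.1.toList} := by
    ext l
    simp only [dyckShuffles, Set.mem_ofPred_eq, Set.mem_iUnion, Sigma.exists, Subtype.exists]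
    constructor
    · rintro ⟨hl, p, hp⟩
      have : 2 * p.semilength ≤ n := by
        rw [p.two_mul_semilength_eq_length, hp, ← hl]; exact List.length_filterMap_le _ _
      exact ⟨⟨p.semilength, by omega⟩, p, rfl, hl, hp.symm⟩
    · rintro ⟨k, p, -, hl, hp⟩
      exact ⟨hl, p, hp.symm⟩
  rw [cover, Set.ncard_iUnion_of_finite, finsum_eq_sum_of_fintype, Fintype.sum_sigma]
  · rw [← Fin.sum_univ_eq_sum_range]
    refine Finset.sum_congr rfl fun k _ => ?_
    have fiber (p : {p : DyckWord // p.semilength = k}) :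
        {l : List (DyckStep ⊕ γ) |
          l.length = n ∧ l.filterMap Sum.getLeft? = p.1.toList}.ncard =
          n.choose (2 * k) * Fintype.card γ ^ (n - 2 * k) := by
      rw [List.ncard_filterMap_getLeft_eq, ← p.1.two_mul_semilength_eq_length, p.2]
    simp only [fiber, Finset.sum_const, Finset.card_univ,
      DyckWord.card_dyckWord_semilength_eq_catalan, smul_eq_mul]
    ring
  · exact fun i => (List.finite_length_eq _ n).subset fun l hl => hl.1
  · rintro ⟨k, p, hp⟩ ⟨k', p', hp'⟩ hne
    refine Set.disjoint_left.2 fun l hl hl' => hne ?_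
    obtain rfl : p = p' := DyckWord.ext (hl.2.symm.trans hl'.2)
    obtain rfl : k = k' := Fin.ext (hp.symm.trans hp')
    rfl

def Letter.equivSum : Letter ≃ DyckStep ⊕ Bool where
  toFun
    | .up => .inl .U
    | .down => .inl .D
    | .zero => .inr true
    | .zbar => .inr false
  invFun
    | .inl .U => .up
    | .inl .D => .down
    | .inr true => .zero
    | .inr false => .zbar
  left_inv a := by cases a <;> rfl
  right_inv := by rintro ((_ | _) | (_ | _)) <;> rfl

theorem Letter.sum_map_val (w : List Letter) :
    (w.map val).sum = ((w.filterMap (Sum.getLeft? ∘ equivSum)).map DyckStep.val).sum := by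
  induction w with
  | nil => rfl
  | cons a w ih => cases a <;> simp [ih, val, equivSum, DyckStep.val, List.filterMap_cons]

theorem four_letter_words_card (n : ℕ) :
    {w : List Letter | w.length = n ∧ (w.map val).sum = 0 ∧
      ∀ p, p <+: w → 0 ≤ (p.map val).sum}.ncard =
    ∑ k ∈ Finset.range (n + 1), n.choose (2 * k) * 2 ^ (n - 2 * k) * catalan k := by
  have hS : {w : List Letter | w.length = n ∧ (w.map val).sum = 0 ∧
      ∀ p, p <+: w → 0 ≤ (p.map val).sum} =
        List.map Letter.equivSum ⁻¹' dyckShuffles Bool n := by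
    ext w
    simp only [dyckShuffles, Set.mem_ofPred_eq, Set.mem_preimage, List.length_map,
      List.filterMap_map, Letter.sum_map_val, DyckWord.exists_toList_eq_iff,
      List.forall_prefix_filterMap_iff (P := fun q => 0 ≤ (q.map DyckStep.val).sum)]
  rw [hS, Set.ncard_preimage_of_injective_subset_range
    (List.map_injective_iff.2 Letter.equivSum.injective)
    fun l _ => ⟨l.map Letter.equivSum.symm, by simp⟩, ncard_dyckShuffles, Fintype.card_bool]
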